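/- Let k, m be positive integers, A a real m×k matrix, S₁ = √((I_k + AᵀA)⁻¹), S₂ = √((I_m + AAᵀ)⁻¹), and let Q_A be the (k+m)×(k+m) block matrix Q_A = [[S₁, −AᵀS₂],[A S₁, S₂]]. Then Q_A is an orthogonal matrix: Q_A Q_Aᵀ = I_{k+m}. -/

import Mathlib

open Matrix

section OldSqrt

open scoped ComplexOrder

/-- The positive semidefinite square root of a positive semidefinite matrix
(the definition `Matrix.PosSemidef.sqrt` of the older Mathlib, since removed). -/
noncomputable def Matrix.PosSemidef.sqrt {n 𝕜 : Type*} [Fintype n] [RCLike 𝕜] [DecidableEq n]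
    {A : Matrix n n 𝕜} (hA : A.PosSemidef) : Matrix n n 𝕜 :=
  hA.1.eigenvectorUnitary.1 * diagonal ((↑) ∘ (√·) ∘ hA.1.eigenvalues) *
  (star hA.1.eigenvectorUnitary : Matrix n n 𝕜)

end OldSqrt

namespace Matrix.PosSemidef

open scoped ComplexOrder

lemma posSemidef_sqrt {n 𝕜 : Type*} [Fintype n] [RCLike 𝕜] [DecidableEq n]
    {A : Matrix n n 𝕜} (hA : A.PosSemidef) : PosSemidef hA.sqrt := by
  unfold Matrix.PosSemidef.sqrt
  have h := (posSemidef_diagonal_iff (d := ((↑) ∘ (√·) ∘ hA.1.eigenvalues : n → 𝕜))).mpr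
    (fun i => by
      rw [Function.comp_apply, RCLike.nonneg_iff]
      constructor
      · simp only [Function.comp_apply, RCLike.ofReal_re]
        exact Real.sqrt_nonneg _
      · simp only [Function.comp_apply, RCLike.ofReal_im])
  have := h.mul_mul_conjTranspose_same (hA.1.eigenvectorUnitary : Matrix n n 𝕜)
  simpa [Matrix.star_eq_conjTranspose] using this

lemma sqrt_mul_self {n 𝕜 : Type*} [Fintype n] [RCLike 𝕜] [DecidableEq n]
    {A : Matrix n n 𝕜} (hA : A.PosSemidef) : hA.sqrt * hA.sqrt = A := by
  unfold Matrix.PosSemidef.sqrt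
  set C : Matrix n n 𝕜 := hA.1.eigenvectorUnitary.1
  set E := diagonal ((↑) ∘ (√·) ∘ hA.1.eigenvalues : n → 𝕜)
  have hC : star C * C = 1 := by simp [C]
  have hE : E * E = diagonal (RCLike.ofReal ∘ hA.1.eigenvalues) := by
    rw [diagonal_mul_diagonal]
    refine congr_arg _ <| funext fun v => ?_
    simp [← pow_two, ← RCLike.ofReal_pow, Real.sq_sqrt (hA.eigenvalues_nonneg v)]
  calc C * E * star C * (C * E * star C) = C * (E * (star C * C) * E) * star C := by
        simp only [Matrix.mul_assoc]
    _ = A := by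
      rw [hC, Matrix.mul_one, hE]
      conv_rhs => rw [hA.1.spectral_theorem, Unitary.conjStarAlgAut_apply]

end Matrix.PosSemidef

/-- With `S₁ = √((I_k + AᵀA)⁻¹)` and `S₂ = √((I_m + AAᵀ)⁻¹)`,
the block matrix `Q_A = [[S₁, −AᵀS₂], [A S₁, S₂]]` is orthogonal:
`Q_A Q_Aᵀ = I_{k+m}`. -/
theorem blockMatrix_QA_orthogonal
    (k m : ℕ) (hk : 0 < k) (hm : 0 < m) (A : Matrix (Fin m) (Fin k) ℝ)
    (h₁ : ((1 + Aᵀ * A)⁻¹).PosSemidef) (h₂ : ((1 + A * Aᵀ)⁻¹).PosSemidef)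
    (Q : Matrix (Fin k ⊕ Fin m) (Fin k ⊕ Fin m) ℝ)
    (hQ : Q = Matrix.fromBlocks h₁.sqrt (-(Aᵀ * h₂.sqrt)) (A * h₁.sqrt) h₂.sqrt) :
    Q * Qᵀ = 1 := by
  have hBpd : (1 + Aᵀ * A).PosDef := by
    have := Matrix.posSemidef_conjTranspose_mul_self A
    exact Matrix.PosDef.add_posSemidef Matrix.PosDef.one this
  have hCpd : (1 + A * Aᵀ).PosDef := by
    have := Matrix.posSemidef_self_mul_conjTranspose A
    exact Matrix.PosDef.add_posSemidef Matrix.PosDef.one this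
  have hBu : IsUnit (1 + Aᵀ * A).det := (Matrix.isUnit_iff_isUnit_det _).1 hBpd.isUnit
  have hCu : IsUnit (1 + A * Aᵀ).det := (Matrix.isUnit_iff_isUnit_det _).1 hCpd.isUnit
  have hBinv : (1 + Aᵀ * A)⁻¹ * (1 + Aᵀ * A) = 1 := Matrix.nonsing_inv_mul _ hBu
  have hBinv' : (1 + Aᵀ * A) * (1 + Aᵀ * A)⁻¹ = 1 := Matrix.mul_nonsing_inv _ hBu
  have hCinv : (1 + A * Aᵀ)⁻¹ * (1 + A * Aᵀ) = 1 := Matrix.nonsing_inv_mul _ hCu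
  have hCinv' : (1 + A * Aᵀ) * (1 + A * Aᵀ)⁻¹ = 1 := Matrix.mul_nonsing_inv _ hCu
  have hs1 : h₁.sqrt * h₁.sqrt = (1 + Aᵀ * A)⁻¹ := h₁.sqrt_mul_self
  have hs2 : h₂.sqrt * h₂.sqrt = (1 + A * Aᵀ)⁻¹ := h₂.sqrt_mul_self
  have hs1t : h₁.sqrtᵀ = h₁.sqrt := by simpa [Matrix.IsSymm] using h₁.posSemidef_sqrt.isHermitian
  have hs2t : h₂.sqrtᵀ = h₂.sqrt := by simpa [Matrix.IsSymm] using h₂.posSemidef_sqrt.isHermitian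
  have hcomm : Aᵀ * (1 + A * Aᵀ) = (1 + Aᵀ * A) * Aᵀ := by
    rw [Matrix.mul_add, Matrix.add_mul, Matrix.mul_one, Matrix.one_mul, Matrix.mul_assoc]
  have hswap : (1 + Aᵀ * A)⁻¹ * Aᵀ = Aᵀ * (1 + A * Aᵀ)⁻¹ := by
    have h := congrArg (fun M => (1 + Aᵀ * A)⁻¹ * M * (1 + A * Aᵀ)⁻¹) hcomm
    rw [← Matrix.mul_assoc _ _ Aᵀ, hBinv, Matrix.one_mul,
      ← Matrix.mul_assoc ((1 + Aᵀ * A)⁻¹) Aᵀ (1 + A * Aᵀ),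
      Matrix.mul_assoc ((1 + Aᵀ * A)⁻¹ * Aᵀ), hCinv', Matrix.mul_one] at h
    exact h
  have hswap' : A * (1 + Aᵀ * A)⁻¹ = (1 + A * Aᵀ)⁻¹ * A := by
    have h := congrArg Matrix.transpose hswap
    simp only [Matrix.transpose_mul, Matrix.transpose_nonsing_inv, Matrix.transpose_add,
      Matrix.transpose_one, Matrix.transpose_transpose] at h
    exact h
  -- block identities
  have hTL : (1 + Aᵀ * A)⁻¹ + Aᵀ * ((1 + A * Aᵀ)⁻¹ * A) = 1 := by
    rw [← Matrix.mul_assoc, ← hswap, Matrix.mul_assoc]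
    nth_rewrite 1 [← Matrix.mul_one ((1 + Aᵀ * A)⁻¹)]
    rw [← Matrix.mul_add]
    exact hBinv
  have hBR : A * ((1 + Aᵀ * A)⁻¹ * Aᵀ) + (1 + A * Aᵀ)⁻¹ = 1 := by
    rw [← Matrix.mul_assoc, hswap', Matrix.mul_assoc]
    nth_rewrite 2 [← Matrix.mul_one ((1 + A * Aᵀ)⁻¹)]
    rw [← Matrix.mul_add, add_comm (A * Aᵀ)]
    exact hCinv
  subst hQ
  rw [Matrix.fromBlocks_transpose, Matrix.fromBlocks_multiply]
  simp only [Matrix.transpose_neg, Matrix.transpose_mul, Matrix.transpose_transpose,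
    hs1t, hs2t, Matrix.neg_mul, Matrix.mul_neg, neg_neg]
  have e11 : h₁.sqrt * h₁.sqrt + Aᵀ * h₂.sqrt * (h₂.sqrt * A) = 1 := by
    rw [hs1, Matrix.mul_assoc Aᵀ, ← Matrix.mul_assoc h₂.sqrt, hs2, ← Matrix.mul_assoc,
      Matrix.mul_assoc Aᵀ]
    exact hTL
  have e12 : h₁.sqrt * (h₁.sqrt * Aᵀ) + -(Aᵀ * h₂.sqrt * h₂.sqrt) = 0 := by
    rw [← Matrix.mul_assoc, hs1, Matrix.mul_assoc Aᵀ, hs2, hswap]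
    exact add_neg_cancel _
  have e21 : A * h₁.sqrt * h₁.sqrt + -(h₂.sqrt * (h₂.sqrt * A)) = 0 := by
    rw [Matrix.mul_assoc A, hs1, ← Matrix.mul_assoc h₂.sqrt, hs2, hswap']
    exact add_neg_cancel _
  have e22 : A * h₁.sqrt * (h₁.sqrt * Aᵀ) + h₂.sqrt * h₂.sqrt = 1 := by
    rw [Matrix.mul_assoc A, ← Matrix.mul_assoc h₁.sqrt, hs1, hs2, ← Matrix.mul_assoc A,
      Matrix.mul_assoc A]
    exact hBR
  rw [e11, e12, e21, e22, Matrix.fromBlocks_one]
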